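/- arXiv:2602.18547 — 5 statements merged into one kernel-verified Lean document; each statement's English description precedes it below -/
import Mathlib

section
/- Let (X, μ) be a finite measure space, w : X → (0,∞) measurable with ∫ w dμ < ∞, and a > 0. Then for every measurable probability density f : X → (0,∞) (i.e., f > 0 a.e. and ∫ f dμ = 1), one has ∫ w(x) f(x)^(-a) dμ(x) ≥ (∫ w(x)^(1/(a+1)) dμ(x))^(a+1). -/
open MeasureTheory Filter
open scoped ENNReal

/-!
With `p = a + 1`, write `w ^ (1/p) = (w f⁻ᵃ) ^ (1/p) · f ^ (a/p)`. Hölder's inequality with the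
exponents `1/p + a/p = 1` bounds `∫ w ^ (1/p)` by `(∫ w f⁻ᵃ) ^ (1/p) (∫ f) ^ (a/p)`, and `∫ f = 1`.
-/

theorem ENNReal.ofReal_mul_rpow_neg_rpow_mul_rpow {w f : ℝ} (hw : 0 < w) (hf : 0 < f) (a t : ℝ) :
    ENNReal.ofReal (w * f ^ (-a)) ^ t * ENNReal.ofReal f ^ (a * t) = ENNReal.ofReal (w ^ t) := by
  rw [ENNReal.ofReal_rpow_of_pos (by positivity), ENNReal.ofReal_rpow_of_pos hf,
    ← ENNReal.ofReal_mul (by positivity), Real.mul_rpow hw.le (by positivity),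
    ← Real.rpow_mul hf.le, mul_assoc, ← Real.rpow_add hf, neg_mul, neg_add_cancel,
    Real.rpow_zero, mul_one]

section

variable {X : Type*} [MeasurableSpace X] {μ : Measure X}

theorem ENNReal.lintegral_rpow_mul_rpow_pow_le {g h : X → ℝ≥0∞} (hg : AEMeasurable g μ)
    (hh : AEMeasurable h μ) {a : ℝ} (ha : 0 < a) :
    (∫⁻ x, g x ^ (1 / (a + 1)) * h x ^ (a / (a + 1)) ∂μ) ^ (a + 1) ≤
      (∫⁻ x, g x ∂μ) * (∫⁻ x, h x ∂μ) ^ a := by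
  have hp : 0 < a + 1 := by linarith
  have holder := ENNReal.lintegral_mul_norm_pow_le hg hh (p := 1 / (a + 1)) (q := a / (a + 1))
    (by positivity) (by positivity) (by rw [← add_div, add_comm, div_self hp.ne'])
  calc _ ≤ ((∫⁻ x, g x ∂μ) ^ (1 / (a + 1)) * (∫⁻ x, h x ∂μ) ^ (a / (a + 1))) ^ (a + 1) :=
        ENNReal.rpow_le_rpow holder hp.le
    _ = (∫⁻ x, g x ∂μ) * (∫⁻ x, h x ∂μ) ^ a := by
        rw [ENNReal.mul_rpow_of_nonneg _ _ hp.le, ← ENNReal.rpow_mul, ← ENNReal.rpow_mul,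
          one_div_mul_cancel hp.ne', div_mul_cancel₀ a hp.ne', ENNReal.rpow_one]

theorem MeasureTheory.ofReal_integral_le_lintegral_ofReal {g : X → ℝ} (hg_nonneg : 0 ≤ᵐ[μ] g)
    (hg : AEStronglyMeasurable g μ) :
    ENNReal.ofReal (∫ x, g x ∂μ) ≤ ∫⁻ x, ENNReal.ofReal (g x) ∂μ := by
  rw [integral_eq_lintegral_of_nonneg_ae hg_nonneg hg]
  exact ENNReal.ofReal_toReal_le

end

theorem stmt_0_general {X : Type*} [MeasurableSpace X] (μ : Measure X)
    (w : X → ℝ) (hw_meas : Measurable w) (hw_pos : ∀ x, 0 < w x)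
    (a : ℝ) (ha : 0 < a)
    (f : X → ℝ) (hf_meas : Measurable f) (hf_pos : ∀ᵐ x ∂μ, 0 < f x)
    (hf_int : ∫ x, f x ∂μ = 1) :
    ENNReal.ofReal ((∫ x, w x ^ (1 / (a + 1)) ∂μ) ^ (a + 1)) ≤
      ∫⁻ x, ENNReal.ofReal (w x * f x ^ (-a)) ∂μ := by
  have hf_nonneg : 0 ≤ᵐ[μ] f := hf_pos.mono fun _ h => h.le
  have hw_root_nonneg : ∀ x, 0 ≤ w x ^ (1 / (a + 1)) := fun x => Real.rpow_nonneg (hw_pos x).le _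
  have hf_mass : ∫⁻ x, ENNReal.ofReal (f x) ∂μ = 1 := by
    rwa [integral_eq_lintegral_of_nonneg_ae hf_nonneg hf_meas.aestronglyMeasurable,
      ENNReal.toReal_eq_one_iff] at hf_int
  have hsplit : ∀ᵐ x ∂μ, ENNReal.ofReal (w x ^ (1 / (a + 1))) =
      ENNReal.ofReal (w x * f x ^ (-a)) ^ (1 / (a + 1)) * ENNReal.ofReal (f x) ^ (a / (a + 1)) := by
    filter_upwards [hf_pos] with x hfx
    rw [← mul_one_div a, ENNReal.ofReal_mul_rpow_neg_rpow_mul_rpow (hw_pos x) hfx]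
  calc ENNReal.ofReal ((∫ x, w x ^ (1 / (a + 1)) ∂μ) ^ (a + 1))
      = ENNReal.ofReal (∫ x, w x ^ (1 / (a + 1)) ∂μ) ^ (a + 1) :=
        (ENNReal.ofReal_rpow_of_nonneg (integral_nonneg hw_root_nonneg) (by positivity)).symm
    _ ≤ (∫⁻ x, ENNReal.ofReal (w x ^ (1 / (a + 1))) ∂μ) ^ (a + 1) := by
        gcongr
        exact ofReal_integral_le_lintegral_ofReal (.of_forall hw_root_nonneg)
          (hw_meas.pow_const _).aestronglyMeasurable
    _ = (∫⁻ x, ENNReal.ofReal (w x * f x ^ (-a)) ^ (1 / (a + 1)) *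
          ENNReal.ofReal (f x) ^ (a / (a + 1)) ∂μ) ^ (a + 1) := by
        rw [lintegral_congr_ae hsplit]
    _ ≤ (∫⁻ x, ENNReal.ofReal (w x * f x ^ (-a)) ∂μ) * (∫⁻ x, ENNReal.ofReal (f x) ∂μ) ^ a :=
        ENNReal.lintegral_rpow_mul_rpow_pow_le
          (hw_meas.mul (hf_meas.pow_const _)).ennreal_ofReal.aemeasurable
          hf_meas.ennreal_ofReal.aemeasurable ha
    _ = ∫⁻ x, ENNReal.ofReal (w x * f x ^ (-a)) ∂μ := by
        rw [hf_mass, ENNReal.one_rpow, mul_one]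

/-- Hölder lower bound: for a finite measure `μ`, a positive integrable weight `w`,
`a > 0`, and any probability density `f`, one has
`∫ w f^(-a) dμ ≥ (∫ w^(1/(a+1)) dμ)^(a+1)`. -/
theorem stmt_0 {X : Type*} [MeasurableSpace X] (μ : Measure X) [IsFiniteMeasure μ]
    (w : X → ℝ) (hw_meas : Measurable w) (hw_pos : ∀ x, 0 < w x)
    (hw_int : Integrable w μ) (a : ℝ) (ha : 0 < a)
    (f : X → ℝ) (hf_meas : Measurable f) (hf_pos : ∀ᵐ x ∂μ, 0 < f x)
    (hf_int : ∫ x, f x ∂μ = 1) :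
    ENNReal.ofReal ((∫ x, w x ^ (1 / (a + 1)) ∂μ) ^ (a + 1)) ≤
      ∫⁻ x, ENNReal.ofReal (w x * f x ^ (-a)) ∂μ :=
  stmt_0_general μ w hw_meas hw_pos a ha f hf_meas hf_pos hf_int
end

section
/- Let (X, μ) be a finite measure space, w : X → (0,∞) measurable with ∫ w dμ < ∞, and a > 0. If a probability density f : X → (0,∞) satisfies ∫ w f^(-a) dμ = (∫ w^(1/(a+1)) dμ)^(a+1), then f(x) = w(x)^(1/(a+1)) / ∫ w(y)^(1/(a+1)) dμ(y) for μ-almost every x ∈ X. -/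
/-!
With `c = ∫ w^(1/(a+1)) dμ`, weighted AM–GM with weights `1/(a+1)` and `a/(a+1)` gives the
pointwise bound `(a+1) c^a w^(1/(a+1)) ≤ w f^(-a) + a c^(a+1) f`, with equality only where
`f = w^(1/(a+1)) / c`. Under the hypotheses both sides have integral `(a+1) c^(a+1)`, so the
bound is an equality almost everywhere.
-/

open MeasureTheory Filter

namespace Real

variable {a c t W : ℝ}

lemma young_rpow_neg_geom_mean_eq (ha : 0 < a) (hW : 0 ≤ W) (ht : 0 < t) (hc : 0 ≤ c) :
    (W * t ^ (-a)) ^ (1 / (a + 1)) * (c ^ (a + 1) * t) ^ (a / (a + 1)) =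
      c ^ a * W ^ (1 / (a + 1)) := by
  rw [mul_rpow hW (by positivity), mul_rpow (by positivity) ht.le, ← rpow_mul ht.le,
    ← rpow_mul hc, mul_mul_mul_comm, ← rpow_add ht]
  field_simp
  simp

lemma young_rpow_neg_le (ha : 0 < a) (hW : 0 ≤ W) (ht : 0 < t) (hc : 0 ≤ c) :
    (a + 1) * (c ^ a * W ^ (1 / (a + 1))) ≤ W * t ^ (-a) + a * (c ^ (a + 1) * t) := by
  have := geom_mean_le_arith_mean2_weighted (w₁ := 1 / (a + 1)) (w₂ := a / (a + 1))
    (p₁ := W * t ^ (-a)) (p₂ := c ^ (a + 1) * t) (by positivity) (by positivity)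
    (by positivity) (by positivity) (by field_simp; ring)
  rw [young_rpow_neg_geom_mean_eq ha hW ht hc] at this
  calc _ ≤ (a + 1) * (1 / (a + 1) * (W * t ^ (-a)) + a / (a + 1) * (c ^ (a + 1) * t)) := by
        gcongr
    _ = _ := by field_simp

lemma eq_rpow_div_of_young_rpow_neg_eq (ha : 0 < a) (hW : 0 ≤ W) (ht : 0 < t) (hc : 0 < c)
    (h : (a + 1) * (c ^ a * W ^ (1 / (a + 1))) = W * t ^ (-a) + a * (c ^ (a + 1) * t)) :
    t = W ^ (1 / (a + 1)) / c := by
  have hmean : W * t ^ (-a) = c ^ (a + 1) * t := by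
    refine ((geom_mean_eq_arith_mean2_weighted_iff_of_pos (w₁ := 1 / (a + 1))
      (w₂ := a / (a + 1)) (by positivity) (by positivity) (by positivity) (by positivity)
      (by field_simp; ring)).1 ?_)
    rw [young_rpow_neg_geom_mean_eq ha hW ht hc.le]
    field_simp
    linarith
  have hW_eq : W = (c * t) ^ (a + 1) :=
    calc W = W * t ^ (-a) * t ^ a := by rw [mul_assoc, ← rpow_add ht]; simp
      _ = (c * t) ^ (a + 1) := by rw [hmean, mul_rpow hc.le ht.le, rpow_add_one ht.ne']; ring
  rw [eq_div_iff hc.ne', hW_eq, ← rpow_mul (by positivity)]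
  field_simp
  simp [mul_comm]

end Real

namespace MeasureTheory

lemma integrable_and_integral_eq_of_lintegral_ofReal_eq {X : Type*} [MeasurableSpace X]
    {μ : Measure X} {g : X → ℝ} {r : ℝ} (hg : AEStronglyMeasurable g μ)
    (hg0 : 0 ≤ᵐ[μ] g) (hr : 0 ≤ r) (h : ∫⁻ x, ENNReal.ofReal (g x) ∂μ = ENNReal.ofReal r) :
    Integrable g μ ∧ ∫ x, g x ∂μ = r :=
  ⟨⟨hg, (hasFiniteIntegral_iff_ofReal hg0).2 (h ▸ ENNReal.ofReal_lt_top)⟩,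
    by rw [integral_eq_lintegral_of_nonneg_ae hg0 hg, h, ENNReal.toReal_ofReal hr]⟩

end MeasureTheory

theorem stmt_1_general {X : Type*} [MeasurableSpace X] (μ : Measure X) [IsFiniteMeasure μ]
    (w : X → ℝ) (hw_pos : ∀ x, 0 < w x)
    (hw_int : Integrable w μ) (a : ℝ) (ha : 0 < a)
    (f : X → ℝ) (hf_pos : ∀ᵐ x ∂μ, 0 < f x)
    (hf_int : ∫ x, f x ∂μ = 1)
    (heq : ∫⁻ x, ENNReal.ofReal (w x * f x ^ (-a)) ∂μ =
      ENNReal.ofReal ((∫ x, w x ^ (1 / (a + 1)) ∂μ) ^ (a + 1))) :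
    ∀ᵐ x ∂μ, f x = w x ^ (1 / (a + 1)) / ∫ y, w y ^ (1 / (a + 1)) ∂μ := by
  rcases eq_or_ne μ 0 with rfl | hμ
  · simp
  set p : ℝ := 1 / (a + 1)
  set c : ℝ := ∫ y, w y ^ p ∂μ
  have hf_intg : Integrable f μ := .of_integral_ne_zero (by simp [hf_int])
  have hwp_int : Integrable (fun x ↦ w x ^ p) μ :=
    (integrable_norm_rpow_of_le hw_int.aestronglyMeasurable (p := p) (by positivity)
      zero_le_one
      (by rw [div_le_one (by positivity)]; linarith) (by simpa using hw_int.norm)).congr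
      (.of_forall fun x ↦ by simp [Real.norm_of_nonneg (hw_pos x).le])
  have hc : 0 < c := by
    refine (integral_pos_iff_support_of_nonneg
      (fun x ↦ (Real.rpow_pos_of_pos (hw_pos x) p).le) hwp_int).2 ?_
    simpa [Function.support, (Real.rpow_pos_of_pos (hw_pos _) _).ne'] using hμ
  obtain ⟨hg_int, hg⟩ := integrable_and_integral_eq_of_lintegral_ofReal_eq
    (g := fun x ↦ w x * f x ^ (-a))
    (hw_int.aestronglyMeasurable.mul (hf_intg.aemeasurable.pow_const (-a)).aestronglyMeasurable)
    (by filter_upwards [hf_pos] with x hx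
      using (mul_pos (hw_pos x) (Real.rpow_pos_of_pos hx _)).le)
    (Real.rpow_pos_of_pos hc _).le heq
  have hle : (fun x ↦ (a + 1) * (c ^ a * w x ^ p)) ≤ᵐ[μ]
      fun x ↦ w x * f x ^ (-a) + a * (c ^ (a + 1) * f x) := by
    filter_upwards [hf_pos] with x hx using Real.young_rpow_neg_le ha (hw_pos x).le hx hc.le
  have h_int_eq : ∫ x, (a + 1) * (c ^ a * w x ^ p) ∂μ =
      ∫ x, w x * f x ^ (-a) + a * (c ^ (a + 1) * f x) ∂μ := by
    rw [integral_add hg_int ((hf_intg.const_mul _).const_mul _), integral_const_mul,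
      integral_const_mul, integral_const_mul, integral_const_mul, hf_int, hg,
      Real.rpow_add_one hc.ne']
    ring
  filter_upwards [hf_pos, (integral_eq_iff_of_ae_le ((hwp_int.const_mul _).const_mul _)
    (hg_int.add ((hf_intg.const_mul _).const_mul _)) hle).1 h_int_eq] with x hx hx_eq
  exact Real.eq_rpow_div_of_young_rpow_neg_eq ha (hw_pos x).le hx hc hx_eq

/-- Equality case of the Hölder lower bound: if a probability density `f` attains
`∫ w f^(-a) dμ = (∫ w^(1/(a+1)) dμ)^(a+1)`, then `f` is μ-a.e. equal to the
normalized density proportional to `w^(1/(a+1))`. -/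
theorem stmt_1 {X : Type*} [MeasurableSpace X] (μ : Measure X) [IsFiniteMeasure μ]
    (w : X → ℝ) (hw_meas : Measurable w) (hw_pos : ∀ x, 0 < w x)
    (hw_int : Integrable w μ) (a : ℝ) (ha : 0 < a)
    (f : X → ℝ) (hf_meas : Measurable f) (hf_pos : ∀ᵐ x ∂μ, 0 < f x)
    (hf_int : ∫ x, f x ∂μ = 1)
    (heq : ∫⁻ x, ENNReal.ofReal (w x * f x ^ (-a)) ∂μ =
      ENNReal.ofReal ((∫ x, w x ^ (1 / (a + 1)) ∂μ) ^ (a + 1))) :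
    ∀ᵐ x ∂μ, f x = w x ^ (1 / (a + 1)) / ∫ y, w y ^ (1 / (a + 1)) ∂μ :=
  stmt_1_general μ w hw_pos hw_int a ha f hf_pos hf_int heq
end

section
/- Let (X, μ) be a finite measure space, w : X → (0,∞) integrable, and a > 0. The density f_opt(x) := w(x)^(1/(a+1)) / ∫ w^(1/(a+1)) dμ is the unique minimizer of the functional f ↦ ∫ w f^(-a) dμ over all measurable probability densities f > 0 a.e. on X, and its minimal value equals (∫ w^(1/(a+1)) dμ)^(a+1). -/
open MeasureTheory Filter

/-! With `t = 1/(a+1)`, `J = ∫ w^t` and `fopt = w^t / J` one has `w = (J fopt)^(a+1)`,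
so `∫ w f^(-a) = J^(a+1) ∫ fopt^(a+1) f^(-a)`, and it suffices to show `∫ p^α q^(1-α) ≥ 1`
for probability densities `p, q` and `α > 1`, with equality only when `p = q` a.e.
(nonnegativity of the Rényi divergence). Pointwise weighted AM-GM with weights `1/α`, `1 - 1/α`
applied to `u = p^α q^(1-α)` and `q` gives `p = u^(1/α) q^(1-1/α) ≤ u/α + (1 - 1/α) q`;
integrating gives the inequality, and equality in the integrated form forces `u = q`, hence
`p = q`, almost everywhere. -/

theorem Real.rpow_mul_rpow_one_sub_rpow_inv {x y α : ℝ} (hx : 0 ≤ x) (hy : 0 < y)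
    (hα : α ≠ 0) :
    (x ^ α * y ^ (1 - α)) ^ α⁻¹ * y ^ (1 - α⁻¹) = x := by
  rw [Real.mul_rpow (Real.rpow_nonneg hx α) (Real.rpow_nonneg hy.le _), ← Real.rpow_mul hx,
    ← Real.rpow_mul hy.le, mul_inv_cancel₀ hα, Real.rpow_one, mul_assoc, ← Real.rpow_add hy,
    show (1 - α) * α⁻¹ + (1 - α⁻¹) = 0 by field_simp; ring, Real.rpow_zero, mul_one]

namespace MeasureTheory

variable {X : Type*} [MeasurableSpace X] {μ : Measure X}

theorem Integrable.rpow_const_of_le_one [IsFiniteMeasure μ] {f : X → ℝ} (hf : Integrable f μ)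
    (hf0 : 0 ≤ᵐ[μ] f) {t : ℝ} (ht0 : 0 ≤ t) (ht1 : t ≤ 1) :
    Integrable (fun x => f x ^ t) μ := by
  refine ((hf.const_mul t).add (integrable_const (1 - t))).mono'
    (hf.aestronglyMeasurable.aemeasurable.pow_const t).aestronglyMeasurable ?_
  filter_upwards [hf0] with x hx
  simpa [abs_of_nonneg hx, abs_of_nonneg (Real.rpow_nonneg hx t)] using
    Real.geom_mean_le_arith_mean2_weighted ht0 (sub_nonneg.2 ht1) hx zero_le_one (by ring)

lemma integral_pos_of_forall_pos [NeZero μ] {f : X → ℝ} (hf : ∀ x, 0 < f x)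
    (hfi : Integrable f μ) : 0 < ∫ x, f x ∂μ := by
  rw [integral_pos_iff_support_of_nonneg (fun x => (hf x).le) hfi,
    Function.support_eq_univ fun x => (hf x).ne']
  simp [NeZero.ne μ]

section WeightedAMGM

variable {u v : X → ℝ} {t : ℝ}

theorem integral_rpow_mul_rpow_le (ht0 : 0 ≤ t) (ht1 : t ≤ 1) (hu : 0 ≤ᵐ[μ] u)
    (hv : 0 ≤ᵐ[μ] v) (hui : Integrable u μ) (hvi : Integrable v μ)
    (hi : Integrable (fun x => u x ^ t * v x ^ (1 - t)) μ) :
    ∫ x, u x ^ t * v x ^ (1 - t) ∂μ ≤ t * ∫ x, u x ∂μ + (1 - t) * ∫ x, v x ∂μ := by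
  have hsum : Integrable (fun x => t * u x + (1 - t) * v x) μ :=
    (hui.const_mul t).add (hvi.const_mul _)
  rw [← integral_const_mul, ← integral_const_mul,
    ← integral_add (hui.const_mul t) (hvi.const_mul _)]
  refine integral_mono_ae hi hsum ?_
  filter_upwards [hu, hv] with x hux hvx
  exact Real.geom_mean_le_arith_mean2_weighted ht0 (sub_nonneg.2 ht1) hux hvx (by ring)

theorem ae_eq_of_integral_rpow_mul_rpow_eq (ht0 : 0 < t) (ht1 : t < 1) (hu : 0 ≤ᵐ[μ] u)
    (hv : 0 ≤ᵐ[μ] v) (hui : Integrable u μ) (hvi : Integrable v μ)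
    (hi : Integrable (fun x => u x ^ t * v x ^ (1 - t)) μ)
    (h : ∫ x, u x ^ t * v x ^ (1 - t) ∂μ = t * ∫ x, u x ∂μ + (1 - t) * ∫ x, v x ∂μ) :
    u =ᵐ[μ] v := by
  have hamgm : ∀ᵐ x ∂μ, u x ^ t * v x ^ (1 - t) ≤ t * u x + (1 - t) * v x := by
    filter_upwards [hu, hv] with x hux hvx
    exact Real.geom_mean_le_arith_mean2_weighted ht0.le (sub_nonneg.2 ht1.le) hux hvx (by ring)
  have hsum : Integrable (fun x => t * u x + (1 - t) * v x) μ :=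
    (hui.const_mul t).add (hvi.const_mul _)
  rw [← integral_const_mul, ← integral_const_mul,
    ← integral_add (hui.const_mul t) (hvi.const_mul _),
    integral_eq_iff_of_ae_le hi hsum hamgm] at h
  filter_upwards [hu, hv, h] with x hux hvx hx
  exact (Real.geom_mean_eq_arith_mean2_weighted_iff_of_pos ht0 (sub_pos.2 ht1) hux hvx
    (by ring)).1 hx

end WeightedAMGM

section Renyi

variable {p q : X → ℝ} {α : ℝ}

lemma rpow_mul_rpow_one_sub_nonneg_ae (hp : 0 ≤ᵐ[μ] p) (hq : ∀ᵐ x ∂μ, 0 < q x) :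
    0 ≤ᵐ[μ] fun x => p x ^ α * q x ^ (1 - α) := by
  filter_upwards [hp, hq] with x hpx hqx
  exact mul_nonneg (Real.rpow_nonneg hpx _) (Real.rpow_nonneg hqx.le _)

lemma rpow_mul_rpow_one_sub_rpow_inv_ae_eq (hα : α ≠ 0) (hp : 0 ≤ᵐ[μ] p)
    (hq : ∀ᵐ x ∂μ, 0 < q x) :
    (fun x => (p x ^ α * q x ^ (1 - α)) ^ α⁻¹ * q x ^ (1 - α⁻¹)) =ᵐ[μ] p := by
  filter_upwards [hp, hq] with x hpx hqx
  exact Real.rpow_mul_rpow_one_sub_rpow_inv hpx hqx hα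

theorem one_le_integral_rpow_mul_rpow_one_sub (hα : 1 < α) (hp : 0 ≤ᵐ[μ] p)
    (hq : ∀ᵐ x ∂μ, 0 < q x) (hp1 : ∫ x, p x ∂μ = 1) (hq1 : ∫ x, q x ∂μ = 1)
    (hi : Integrable (fun x => p x ^ α * q x ^ (1 - α)) μ) :
    1 ≤ ∫ x, p x ^ α * q x ^ (1 - α) ∂μ := by
  have hα0 : 0 < α := zero_lt_one.trans hα
  have hpq := rpow_mul_rpow_one_sub_rpow_inv_ae_eq hα0.ne' hp hq
  have hamgm := integral_rpow_mul_rpow_le (inv_nonneg.2 hα0.le) (inv_le_one_of_one_le₀ hα.le)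
    (rpow_mul_rpow_one_sub_nonneg_ae hp hq) (hq.mono fun x hx => hx.le) hi
    (.of_integral_ne_zero (by simp [hq1]))
    ((integrable_congr hpq).2 (.of_integral_ne_zero (by simp [hp1])))
  rw [integral_congr_ae hpq, hp1, hq1] at hamgm
  have : α⁻¹ * 1 ≤ α⁻¹ * ∫ x, p x ^ α * q x ^ (1 - α) ∂μ := by linarith
  exact le_of_mul_le_mul_left this (inv_pos.2 hα0)

theorem ae_eq_of_integral_rpow_mul_rpow_one_sub_eq_one (hα : 1 < α) (hp : 0 ≤ᵐ[μ] p)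
    (hq : ∀ᵐ x ∂μ, 0 < q x) (hp1 : ∫ x, p x ∂μ = 1) (hq1 : ∫ x, q x ∂μ = 1)
    (hi : Integrable (fun x => p x ^ α * q x ^ (1 - α)) μ)
    (h : ∫ x, p x ^ α * q x ^ (1 - α) ∂μ = 1) :
    p =ᵐ[μ] q := by
  have hα0 : 0 < α := zero_lt_one.trans hα
  have hpq := rpow_mul_rpow_one_sub_rpow_inv_ae_eq hα0.ne' hp hq
  have hq0 : 0 ≤ᵐ[μ] q := hq.mono fun x hx => hx.le
  have hamgm := ae_eq_of_integral_rpow_mul_rpow_eq (inv_pos.2 hα0) (inv_lt_one_of_one_lt₀ hα)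
    (rpow_mul_rpow_one_sub_nonneg_ae hp hq) hq0 hi (.of_integral_ne_zero (by simp [hq1]))
    ((integrable_congr hpq).2 (.of_integral_ne_zero (by simp [hp1])))
    (by rw [integral_congr_ae hpq, hp1, hq1, h]; ring)
  filter_upwards [hpq, hamgm, hq0] with x hpqx hx hqx
  rw [← hpqx, hx, ← Real.rpow_add' hqx (by simp), add_sub_cancel, Real.rpow_one]

lemma integrable_rpow_mul_rpow_one_sub_of_lintegral_ne_top (hp : 0 ≤ᵐ[μ] p)
    (hq : ∀ᵐ x ∂μ, 0 < q x) (hpm : AEMeasurable p μ) (hqm : AEMeasurable q μ)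
    (h : ∫⁻ x, ENNReal.ofReal (p x ^ α * q x ^ (1 - α)) ∂μ ≠ ⊤) :
    Integrable (fun x => p x ^ α * q x ^ (1 - α)) μ :=
  (lintegral_ofReal_ne_top_iff_integrable
    ((hpm.pow_const α).mul (hqm.pow_const _)).aestronglyMeasurable
    (rpow_mul_rpow_one_sub_nonneg_ae hp hq)).1 h

theorem one_le_lintegral_rpow_mul_rpow_one_sub (hα : 1 < α) (hp : 0 ≤ᵐ[μ] p)
    (hq : ∀ᵐ x ∂μ, 0 < q x) (hp1 : ∫ x, p x ∂μ = 1) (hq1 : ∫ x, q x ∂μ = 1) :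
    1 ≤ ∫⁻ x, ENNReal.ofReal (p x ^ α * q x ^ (1 - α)) ∂μ := by
  by_cases hfin : ∫⁻ x, ENNReal.ofReal (p x ^ α * q x ^ (1 - α)) ∂μ = ⊤
  · simp [hfin]
  have hi := integrable_rpow_mul_rpow_one_sub_of_lintegral_ne_top hp hq
    (Integrable.of_integral_ne_zero (by simp [hp1])).aemeasurable
    (Integrable.of_integral_ne_zero (by simp [hq1])).aemeasurable hfin
  rw [← ofReal_integral_eq_lintegral_ofReal hi (rpow_mul_rpow_one_sub_nonneg_ae hp hq)]
  exact ENNReal.one_le_ofReal.2 (one_le_integral_rpow_mul_rpow_one_sub hα hp hq hp1 hq1 hi)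

theorem ae_eq_of_lintegral_rpow_mul_rpow_one_sub_eq_one (hα : 1 < α) (hp : 0 ≤ᵐ[μ] p)
    (hq : ∀ᵐ x ∂μ, 0 < q x) (hp1 : ∫ x, p x ∂μ = 1) (hq1 : ∫ x, q x ∂μ = 1)
    (h : ∫⁻ x, ENNReal.ofReal (p x ^ α * q x ^ (1 - α)) ∂μ = 1) :
    p =ᵐ[μ] q := by
  have hi := integrable_rpow_mul_rpow_one_sub_of_lintegral_ne_top hp hq
    (Integrable.of_integral_ne_zero (by simp [hp1])).aemeasurable
    (Integrable.of_integral_ne_zero (by simp [hq1])).aemeasurable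
    (by rw [h]; exact ENNReal.one_ne_top)
  rw [← ofReal_integral_eq_lintegral_ofReal hi (rpow_mul_rpow_one_sub_nonneg_ae hp hq),
    ENNReal.ofReal_eq_one] at h
  exact ae_eq_of_integral_rpow_mul_rpow_one_sub_eq_one hα hp hq hp1 hq1 hi h

theorem lintegral_rpow_mul_rpow_one_sub_self (hp : 0 ≤ᵐ[μ] p) (hp1 : ∫ x, p x ∂μ = 1) :
    ∫⁻ x, ENNReal.ofReal (p x ^ α * p x ^ (1 - α)) ∂μ = 1 := by
  have hint := ofReal_integral_eq_lintegral_ofReal (.of_integral_ne_zero (by simp [hp1])) hp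
  rw [hp1, ENNReal.ofReal_one] at hint
  rw [hint]
  refine lintegral_congr_ae ?_
  filter_upwards [hp] with x hx
  rw [← Real.rpow_add' hx (by simp), add_sub_cancel, Real.rpow_one]

end Renyi

theorem lintegral_mul_rpow_neg_eq {w : X → ℝ} (hw : ∀ x, 0 ≤ w x) {a c : ℝ}
    (ha : a + 1 ≠ 0) (hc : 0 < c) (f : X → ℝ) :
    ∫⁻ x, ENNReal.ofReal (w x * f x ^ (-a)) ∂μ = ENNReal.ofReal (c ^ (a + 1)) *
      ∫⁻ x, ENNReal.ofReal ((w x ^ (1 / (a + 1)) / c) ^ (a + 1) * f x ^ (1 - (a + 1))) ∂μ :=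
    by
  rw [← lintegral_const_mul' _ _ ENNReal.ofReal_ne_top]
  refine lintegral_congr fun x => ?_
  rw [← ENNReal.ofReal_mul (Real.rpow_nonneg hc.le _), ← mul_assoc,
    ← Real.mul_rpow hc.le (div_nonneg (Real.rpow_nonneg (hw x) _) hc.le),
    mul_div_cancel₀ _ hc.ne', ← Real.rpow_mul (hw x), one_div_mul_cancel ha, Real.rpow_one,
    show 1 - (a + 1) = -a by ring]

end MeasureTheory

theorem stmt_2_general {X : Type*} [MeasurableSpace X] (μ : Measure X) [IsFiniteMeasure μ]
    (hμ : μ ≠ 0) (w : X → ℝ) (hw_pos : ∀ x, 0 < w x)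
    (hw_int : Integrable w μ) (a : ℝ) (ha : 0 < a)
    (fopt : X → ℝ)
    (hfopt : fopt = fun x => w x ^ (1 / (a + 1)) / ∫ y, w y ^ (1 / (a + 1)) ∂μ) :
    -- fopt is a probability density
    ((∀ᵐ x ∂μ, 0 < fopt x) ∧ ∫ x, fopt x ∂μ = 1) ∧
    -- its value is the optimal one
    (∫⁻ x, ENNReal.ofReal (w x * fopt x ^ (-a)) ∂μ =
      ENNReal.ofReal ((∫ x, w x ^ (1 / (a + 1)) ∂μ) ^ (a + 1))) ∧
    -- it minimizes the functional over all probability densities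
    (∀ f : X → ℝ, Measurable f → (∀ᵐ x ∂μ, 0 < f x) → ∫ x, f x ∂μ = 1 →
      ∫⁻ x, ENNReal.ofReal (w x * fopt x ^ (-a)) ∂μ ≤
        ∫⁻ x, ENNReal.ofReal (w x * f x ^ (-a)) ∂μ) ∧
    -- and it is the unique minimizer (up to a.e. equality)
    (∀ f : X → ℝ, Measurable f → (∀ᵐ x ∂μ, 0 < f x) → ∫ x, f x ∂μ = 1 →
      ∫⁻ x, ENNReal.ofReal (w x * f x ^ (-a)) ∂μ =
        ENNReal.ofReal ((∫ x, w x ^ (1 / (a + 1)) ∂μ) ^ (a + 1)) →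
      f =ᵐ[μ] fopt) := by
  have : NeZero μ := ⟨hμ⟩
  set J := ∫ x, w x ^ (1 / (a + 1)) ∂μ
  have hJ : 0 < J := integral_pos_of_forall_pos (fun x => Real.rpow_pos_of_pos (hw_pos x) _)
    (hw_int.rpow_const_of_le_one (ae_of_all _ fun x => (hw_pos x).le) (by positivity)
      (div_le_one_of_le₀ (by linarith) (by linarith)))
  have hfopt_pos : ∀ᵐ x ∂μ, 0 < fopt x := ae_of_all _ fun x => by
    rw [hfopt]; exact div_pos (Real.rpow_pos_of_pos (hw_pos x) _) hJ
  have hfopt_one : ∫ x, fopt x ∂μ = 1 := by rw [hfopt, integral_div, div_self hJ.ne']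
  have hfopt_nonneg : 0 ≤ᵐ[μ] fopt := hfopt_pos.mono fun x hx => hx.le
  have ha1 : 1 < a + 1 := by linarith
  have hfactor : ∀ f : X → ℝ, ∫⁻ x, ENNReal.ofReal (w x * f x ^ (-a)) ∂μ =
      ENNReal.ofReal (J ^ (a + 1)) *
        ∫⁻ x, ENNReal.ofReal (fopt x ^ (a + 1) * f x ^ (1 - (a + 1))) ∂μ := by
    rw [hfopt]; exact lintegral_mul_rpow_neg_eq (fun x => (hw_pos x).le) (by linarith) hJ
  have hopt := lintegral_rpow_mul_rpow_one_sub_self (α := a + 1) hfopt_nonneg hfopt_one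
  refine ⟨⟨hfopt_pos, hfopt_one⟩, by rw [hfactor, hopt, mul_one], ?_, ?_⟩
  · intro f _ hf hf_one
    rw [hfactor fopt, hfactor f, hopt, mul_one]
    exact le_mul_of_one_le_right'
      (one_le_lintegral_rpow_mul_rpow_one_sub ha1 hfopt_nonneg hf hfopt_one hf_one)
  · intro f _ hf hf_one hval
    rw [hfactor, ENNReal.mul_eq_left (ENNReal.ofReal_pos.2 (Real.rpow_pos_of_pos hJ _)).ne'
      ENNReal.ofReal_ne_top] at hval
    exact (ae_eq_of_lintegral_rpow_mul_rpow_one_sub_eq_one ha1 hfopt_nonneg hf hfopt_one hf_one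
      hval).symm

/-- The density proportional to `w^(1/(a+1))` is the unique minimizer of
`f ↦ ∫ w f^(-a) dμ` over probability densities, with minimal value
`(∫ w^(1/(a+1)) dμ)^(a+1)`. -/
theorem stmt_2 {X : Type*} [MeasurableSpace X] (μ : Measure X) [IsFiniteMeasure μ]
    (hμ : μ ≠ 0) (w : X → ℝ) (hw_meas : Measurable w) (hw_pos : ∀ x, 0 < w x)
    (hw_int : Integrable w μ) (a : ℝ) (ha : 0 < a)
    (fopt : X → ℝ)
    (hfopt : fopt = fun x => w x ^ (1 / (a + 1)) / ∫ y, w y ^ (1 / (a + 1)) ∂μ) :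
    -- fopt is a probability density
    ((∀ᵐ x ∂μ, 0 < fopt x) ∧ ∫ x, fopt x ∂μ = 1) ∧
    -- its value is the optimal one
    (∫⁻ x, ENNReal.ofReal (w x * fopt x ^ (-a)) ∂μ =
      ENNReal.ofReal ((∫ x, w x ^ (1 / (a + 1)) ∂μ) ^ (a + 1))) ∧
    -- it minimizes the functional over all probability densities
    (∀ f : X → ℝ, Measurable f → (∀ᵐ x ∂μ, 0 < f x) → ∫ x, f x ∂μ = 1 →
      ∫⁻ x, ENNReal.ofReal (w x * fopt x ^ (-a)) ∂μ ≤
        ∫⁻ x, ENNReal.ofReal (w x * f x ^ (-a)) ∂μ) ∧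
    -- and it is the unique minimizer (up to a.e. equality)
    (∀ f : X → ℝ, Measurable f → (∀ᵐ x ∂μ, 0 < f x) → ∫ x, f x ∂μ = 1 →
      ∫⁻ x, ENNReal.ofReal (w x * f x ^ (-a)) ∂μ =
        ENNReal.ofReal ((∫ x, w x ^ (1 / (a + 1)) ∂μ) ^ (a + 1)) →
      f =ᵐ[μ] fopt) :=
  stmt_2_general μ hμ w hw_pos hw_int a ha fopt hfopt
end

section
/- Let d ≥ 2 and let m : ℕ → (0,∞) be a nonincreasing sequence with N^(2/(d-1)) m_N → c for some c > 0. Let (P_N) be a sequence with error e_N ≥ m_{f_N}, where f_N ≤ N is the number of vertices of P_N, and suppose e_N / m_N → 1. Then f_N / N → 1. -/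
open Filter Topology

/-- Asymptotically best-approximating sequences use asymptotically `N` vertices:
if the optimal error `m` is positive, nonincreasing with sharp rate `c·N^(-2/(d-1))`,
the polytope with `f_N ≤ N` vertices has error `e_N ≥ m_{f_N}`, and `e_N/m_N → 1`,
then `f_N/N → 1`. -/
theorem stmt_8 (d : ℕ) (hd : 2 ≤ d) (m : ℕ → ℝ) (hm_pos : ∀ N, 0 < m N)
    (hm_anti : Antitone m) (c : ℝ) (hc : 0 < c)
    (hm : Tendsto (fun N : ℕ => (N : ℝ) ^ (2 / ((d : ℝ) - 1)) * m N) atTop (𝓝 c))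
    (f : ℕ → ℕ) (hf : ∀ N, f N ≤ N)
    (e : ℕ → ℝ) (he : ∀ N, m (f N) ≤ e N)
    (hratio : Tendsto (fun N : ℕ => e N / m N) atTop (𝓝 1)) :
    Tendsto (fun N : ℕ => (f N : ℝ) / (N : ℝ)) atTop (𝓝 1) := by
  set α : ℝ := 2 / ((d : ℝ) - 1) with hα_def
  have hd1 : (0 : ℝ) < (d : ℝ) - 1 := by
    have : (2 : ℝ) ≤ (d : ℝ) := by exact_mod_cast hd
    linarith
  have hα : 0 < α := by positivity
  -- m ratio: m (f N) / m N → 1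
  have hmf_ratio : Tendsto (fun N : ℕ => m (f N) / m N) atTop (𝓝 1) := by
    have h1 : ∀ N, 1 ≤ m (f N) / m N := fun N =>
      (one_le_div (hm_pos N)).2 (hm_anti (hf N))
    have h2 : ∀ N, m (f N) / m N ≤ e N / m N := fun N =>
      (div_le_div_iff_of_pos_right (hm_pos N)).2 (he N)
    exact tendsto_of_tendsto_of_tendsto_of_le_of_le tendsto_const_nhds hratio
      (fun N => h1 N) (fun N => h2 N)
  -- m → 0
  have hm0 : Tendsto m atTop (𝓝 0) := by
    have hneg : Tendsto (fun N : ℕ => (N : ℝ) ^ (-α)) atTop (𝓝 0) :=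
      (tendsto_rpow_neg_atTop hα).comp tendsto_natCast_atTop_atTop
    have := hm.mul hneg
    rw [mul_zero] at this
    apply this.congr'
    filter_upwards [eventually_gt_atTop 0] with N hN
    have hN0 : (0 : ℝ) < (N : ℝ) := by exact_mod_cast hN
    rw [Real.rpow_neg hN0.le]
    field_simp
  -- m (f N) → 0
  have hmf0 : Tendsto (fun N => m (f N)) atTop (𝓝 0) := by
    have : Tendsto (fun N => m (f N) / m N * m N) atTop (𝓝 (1 * 0)) :=
      hmf_ratio.mul hm0
    rw [one_mul] at this
    apply this.congr
    intro N
    rw [div_mul_eq_mul_div, mul_div_assoc, div_self (hm_pos N).ne', mul_one]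
  -- f → ∞
  have hf_top : Tendsto f atTop atTop := by
    rw [tendsto_atTop_atTop]
    intro K
    have : ∀ᶠ N in atTop, m (f N) < m K :=
      hmf0.eventually (eventually_lt_nhds (hm_pos K))
    rcases this.exists_forall_of_atTop with ⟨N₀, hN₀⟩
    refine ⟨N₀, fun N hN => ?_⟩
    by_contra h
    push_neg at h
    exact absurd (hm_anti h.le) (not_le.2 (hN₀ N hN))
  -- (f N)^α * m (f N) → c
  have hcomp : Tendsto (fun N : ℕ => ((f N : ℝ)) ^ α * m (f N)) atTop (𝓝 c) :=
    hm.comp hf_top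
  -- m N / m (f N) → 1
  have hinv : Tendsto (fun N : ℕ => m N / m (f N)) atTop (𝓝 1) := by
    have := hmf_ratio.inv₀ one_ne_zero
    rw [inv_one] at this
    apply this.congr
    intro N
    rw [inv_div]
  -- ((f N)/N)^α → 1
  have hratα : Tendsto (fun N : ℕ => ((f N : ℝ) / (N : ℝ)) ^ α) atTop (𝓝 1) := by
    have hc' : c ≠ 0 := hc.ne'
    have h1 : Tendsto (fun N : ℕ =>
        ((f N : ℝ) ^ α * m (f N)) / ((N : ℝ) ^ α * m N) * (m N / m (f N)))
        atTop (𝓝 (c / c * 1)) := (hcomp.div hm hc').mul hinv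
    rw [div_self hc', one_mul] at h1
    apply h1.congr'
    filter_upwards [eventually_gt_atTop 0, hf_top.eventually (eventually_gt_atTop 0)]
      with N hN hfN
    have hN0 : (0 : ℝ) < (N : ℝ) := by exact_mod_cast hN
    have hfN0 : (0 : ℝ) < ((f N : ℕ) : ℝ) := by exact_mod_cast hfN
    rw [Real.div_rpow hfN0.le hN0.le]
    have h2 : (0 : ℝ) < (N : ℝ) ^ α := Real.rpow_pos_of_pos hN0 _
    have h3 := (hm_pos N).ne'
    have h4 := (hm_pos (f N)).ne'
    field_simp
  -- conclude
  have hfinal := hratα.rpow_const (p := 1 / α) (Or.inr (by positivity))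
  rw [Real.one_rpow] at hfinal
  apply hfinal.congr'
  filter_upwards [eventually_gt_atTop 0] with N hN
  have hr : (0 : ℝ) ≤ (f N : ℝ) / (N : ℝ) := by positivity
  rw [← Real.rpow_mul hr, mul_one_div, div_self hα.ne', Real.rpow_one]
end

section
/- Let n ≥ 1, 0 ≤ k < ℓ ≤ n, and let σ_m denote the m-th elementary symmetric polynomial on ℝⁿ. Then for every λ ∈ (0,∞)ⁿ and every i ∈ {1,...,n}, the partial derivative ∂/∂λᵢ of log σ_ℓ(λ) is strictly greater than the partial derivative ∂/∂λᵢ of log σ_k(λ); in particular, ∂/∂λᵢ (σ_ℓ(λ)/σ_k(λ)) > 0 on the positive cone. -/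
/-!
Write `σ_m(λ) = σ_m(λ|i) + λ_i σ_{m-1}(λ|i)`, where `λ|i` omits `λ_i`.
Then `∂_i σ_m = σ_{m-1}(λ|i)`, and `∂_i log σ_ℓ > ∂_i log σ_k` becomes
`σ_{k-1}(λ|i) σ_ℓ(λ|i) < σ_{ℓ-1}(λ|i) σ_k(λ|i)`: the ratios `σ_{m+1}/σ_m` strictly decrease in `m`
on the positive cone. This weak form of Newton's inequalities follows by induction on the number of
variables, adding one variable at a time.
-/

/-- The `m`-th elementary symmetric polynomial of `f` over the index set `s`. -/
def esymm {n : ℕ} (s : Finset (Fin n)) (m : ℕ) (f : Fin n → ℝ) : ℝ :=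
  ∑ t ∈ s.powersetCard m, ∏ i ∈ t, f i

open Finset Function

section

variable {n : ℕ} {s : Finset (Fin n)} {f : Fin n → ℝ}

@[simp]
lemma esymm_zero (s : Finset (Fin n)) (f : Fin n → ℝ) : esymm s 0 f = 1 := by
  simp [esymm]

@[simp]
lemma esymm_empty (m : ℕ) (f : Fin n → ℝ) : esymm ∅ (m + 1) f = 0 := by
  rw [esymm, powersetCard_eq_empty.2 (by simp), sum_empty]

lemma esymm_congr {g : Fin n → ℝ} (h : ∀ j ∈ s, f j = g j) (m : ℕ) :
    esymm s m f = esymm s m g :=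
  sum_congr rfl fun _ ht => prod_congr rfl fun j hj => h j ((mem_powersetCard.1 ht).1 hj)

lemma esymm_insert {j : Fin n} (hj : j ∉ s) (m : ℕ) (f : Fin n → ℝ) :
    esymm (insert j s) (m + 1) f = esymm s (m + 1) f + f j * esymm s m f := by
  have hjt : ∀ t ∈ s.powersetCard m, j ∉ t := fun t ht hjt => hj ((mem_powersetCard.1 ht).1 hjt)
  rw [esymm, powersetCard_succ_insert hj, sum_union, sum_image, esymm, esymm, mul_sum]
  · exact congrArg _ (sum_congr rfl fun t ht => prod_insert (hjt t ht))
  · intro t ht t' ht' htt'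
    rw [← erase_insert (hjt t ht), ← erase_insert (hjt t' ht'), htt']
  · refine disjoint_right.2 fun t ht ht' => ?_
    obtain ⟨u, -, rfl⟩ := mem_image.1 ht
    exact hj ((mem_powersetCard.1 ht').1 (mem_insert_self j u))

lemma esymm_nonneg (hf : ∀ j, 0 ≤ f j) (m : ℕ) : 0 ≤ esymm s m f :=
  sum_nonneg fun _ _ => prod_nonneg fun j _ => hf j

lemma esymm_pos (hf : ∀ j, 0 < f j) {m : ℕ} (hm : m ≤ s.card) : 0 < esymm s m f :=
  sum_pos (fun _ _ => prod_pos fun j _ => hf j) (powersetCard_nonempty.2 hm)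

lemma esymm_mul_esymm_succ_le (hf : ∀ j, 0 ≤ f j) (s : Finset (Fin n)) {a b : ℕ} (hab : a ≤ b) :
    esymm s a f * esymm s (b + 1) f ≤ esymm s (a + 1) f * esymm s b f := by
  induction s using Finset.cons_induction generalizing a b with
  | empty => cases a <;> simp
  | cons j s hj ih =>
    obtain rfl | hab := hab.eq_or_lt
    · rw [mul_comm]
    obtain ⟨b, rfl⟩ := Nat.exists_eq_add_one.2 (Nat.zero_lt_of_lt hab)
    have hnn := esymm_nonneg (s := s) hf
    have ht := hf j
    rw [cons_eq_insert]
    cases a with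
    | zero =>
      have h := ih (a := 0) (b := b + 1) (Nat.zero_le _)
      simp only [esymm_zero, zero_add, one_mul, esymm_insert hj] at h ⊢
      linarith [mul_nonneg (mul_nonneg ht (hnn 1)) (hnn b), mul_nonneg (mul_nonneg ht ht) (hnn b)]
    | succ a =>
      simp only [esymm_insert hj]
      have h1 := ih (a := a + 1) (b := b + 1) (by omega)
      have h2 := ih (a := a) (b := b + 1) (by omega)
      have h3 := ih (a := a + 1) (b := b) (by omega)
      have h4 := ih (a := a) (b := b) (by omega)
      linarith [mul_le_mul_of_nonneg_left h2 ht, mul_le_mul_of_nonneg_left h3 ht,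
        mul_le_mul_of_nonneg_left h4 (mul_nonneg ht ht)]

lemma esymm_mul_esymm_succ_lt (hf : ∀ j, 0 < f j) (s : Finset (Fin n)) {a b : ℕ} (hab : a < b)
    (hb : b ≤ s.card) :
    esymm s a f * esymm s (b + 1) f < esymm s (a + 1) f * esymm s b f := by
  have hf' j := (hf j).le
  induction s using Finset.cons_induction generalizing a b with
  | empty => simp at hb; omega
  | cons j s hj ih =>
    obtain ⟨b, rfl⟩ := Nat.exists_eq_add_one.2 (Nat.zero_lt_of_lt hab)
    replace hb : b ≤ s.card := by rw [card_cons] at hb; omega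
    have hnn := esymm_nonneg (s := s) hf'
    have ht := hf j
    rw [cons_eq_insert]
    cases a with
    | zero =>
      have h := esymm_mul_esymm_succ_le hf' s (Nat.zero_le (b + 1))
      simp only [esymm_zero, zero_add, one_mul, esymm_insert hj] at h ⊢
      linarith [mul_nonneg (mul_nonneg ht.le (hnn 1)) (hnn b),
        mul_pos (mul_pos ht ht) (esymm_pos hf hb)]
    | succ a =>
      simp only [esymm_insert hj]
      have h1 := esymm_mul_esymm_succ_le hf' s (a := a + 1) (b := b + 1) (by omega)
      have h2 := esymm_mul_esymm_succ_le hf' s (a := a) (b := b + 1) (by omega)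
      have h3 := esymm_mul_esymm_succ_le hf' s (a := a + 1) (b := b) (by omega)
      have h4 := ih (a := a) (b := b) (by omega) hb
      linarith [mul_le_mul_of_nonneg_left h2 ht.le, mul_le_mul_of_nonneg_left h3 ht.le,
        mul_lt_mul_of_pos_left h4 (mul_pos ht ht)]

lemma esymm_succ_eq_esymm_erase {i : Fin n} (hi : i ∈ s) (m : ℕ) (f : Fin n → ℝ) :
    esymm s (m + 1) f = esymm (s.erase i) (m + 1) f + f i * esymm (s.erase i) m f := by
  rw [← esymm_insert (notMem_erase i s), insert_erase hi]

lemma esymm_update_succ {i : Fin n} (hi : i ∈ s) (m : ℕ) (f : Fin n → ℝ) (x : ℝ) :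
    esymm s (m + 1) (update f i x) = esymm (s.erase i) (m + 1) f + x * esymm (s.erase i) m f := by
  have hoff : ∀ j ∈ s.erase i, update f i x j = f j := fun j hj =>
    update_of_ne (ne_of_mem_erase hj) x f
  rw [esymm_succ_eq_esymm_erase hi, update_self, esymm_congr hoff, esymm_congr hoff]

/-- `∂σ_m/∂f_i = σ_{m-1}(f|i)`, with the convention `σ_{-1} = 0`. -/
def esymmPartial (s : Finset (Fin n)) (i : Fin n) : ℕ → (Fin n → ℝ) → ℝ
  | 0, _ => 0
  | m + 1, f => esymm (s.erase i) m f

lemma hasDerivAt_esymm_update {i : Fin n} (hi : i ∈ s) (m : ℕ) (f : Fin n → ℝ) (x : ℝ) :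
    HasDerivAt (fun y => esymm s m (update f i y)) (esymmPartial s i m f) x := by
  cases m with
  | zero => simpa [esymmPartial] using hasDerivAt_const x (1 : ℝ)
  | succ m =>
    simp only [esymm_update_succ hi, esymmPartial]
    simpa using ((hasDerivAt_id x).mul_const (esymm (s.erase i) m f)).const_add
      (esymm (s.erase i) (m + 1) f)

lemma esymmPartial_mul_esymm_lt (hf : ∀ j, 0 < f j) {i : Fin n} (hi : i ∈ s) {k ℓ : ℕ}
    (hkℓ : k < ℓ) (hℓ : ℓ ≤ s.card) :
    esymmPartial s i k f * esymm s ℓ f < esymmPartial s i ℓ f * esymm s k f := by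
  obtain ⟨ℓ, rfl⟩ := Nat.exists_eq_add_one.2 (Nat.zero_lt_of_lt hkℓ)
  have hℓ' : ℓ ≤ (s.erase i).card := by rw [card_erase_of_mem hi]; omega
  cases k with
  | zero => simpa [esymmPartial] using esymm_pos hf hℓ'
  | succ k =>
    simp only [esymmPartial, esymm_succ_eq_esymm_erase hi]
    linarith [esymm_mul_esymm_succ_lt hf (s.erase i) (Nat.lt_of_succ_lt_succ hkℓ) hℓ']

end

lemma deriv_log_lt_deriv_log_of_mul_lt {g h : ℝ → ℝ} {g' h' x : ℝ} (hg : HasDerivAt g g' x)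
    (hh : HasDerivAt h h' x) (hgx : 0 < g x) (hhx : 0 < h x) (H : g' * h x < h' * g x) :
    deriv (fun y => Real.log (g y)) x < deriv (fun y => Real.log (h y)) x := by
  rwa [(hg.log hgx.ne').deriv, (hh.log hhx.ne').deriv, div_lt_div_iff₀ hgx hhx]

lemma deriv_div_pos_of_mul_lt {g h : ℝ → ℝ} {g' h' x : ℝ} (hg : HasDerivAt g g' x)
    (hh : HasDerivAt h h' x) (hgx : g x ≠ 0) (H : g' * h x < h' * g x) :
    0 < deriv (fun y => h y / g y) x := by
  change 0 < deriv (h / g) x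
  rw [(hh.div hg hgx).deriv]
  exact div_pos (by linarith) (by positivity)

theorem stmt_12_general (n k ℓ : ℕ) (hkℓ : k < ℓ) (hℓ : ℓ ≤ n)
    (lam : Fin n → ℝ) (hlam : ∀ i, 0 < lam i) (i : Fin n) :
    deriv (fun s => Real.log (esymm Finset.univ k (Function.update lam i s))) (lam i) <
        deriv (fun s => Real.log (esymm Finset.univ ℓ (Function.update lam i s))) (lam i) ∧
      0 < deriv (fun s =>
          esymm Finset.univ ℓ (Function.update lam i s) /
            esymm Finset.univ k (Function.update lam i s)) (lam i) := by
  have hk := hasDerivAt_esymm_update (mem_univ i) k lam (lam i)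
  have hl := hasDerivAt_esymm_update (mem_univ i) ℓ lam (lam i)
  have hσ : ∀ m ≤ n, 0 < esymm univ m (update lam i (lam i)) := fun m hm => by
    rw [update_eq_self]
    exact esymm_pos hlam (by simpa using hm)
  have hσk := hσ k (hkℓ.le.trans hℓ)
  have key : esymmPartial univ i k lam * esymm univ ℓ (update lam i (lam i)) <
      esymmPartial univ i ℓ lam * esymm univ k (update lam i (lam i)) := by
    rw [update_eq_self]
    exact esymmPartial_mul_esymm_lt hlam (mem_univ i) hkℓ (by simpa using hℓ)
  exact ⟨deriv_log_lt_deriv_log_of_mul_lt hk hl hσk (hσ ℓ hℓ) key,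
    deriv_div_pos_of_mul_lt hk hl hσk.ne' key⟩

/-- Ellipticity of the Weingarten quotient: on the positive cone, for `k < ℓ`,
`∂ᵢ log σ_ℓ > ∂ᵢ log σ_k`; in particular `∂ᵢ (σ_ℓ/σ_k) > 0`. -/
theorem stmt_12 (n k ℓ : ℕ) (hn : 1 ≤ n) (hkℓ : k < ℓ) (hℓ : ℓ ≤ n)
    (lam : Fin n → ℝ) (hlam : ∀ i, 0 < lam i) (i : Fin n) :
    deriv (fun s => Real.log (esymm Finset.univ k (Function.update lam i s))) (lam i) <
        deriv (fun s => Real.log (esymm Finset.univ ℓ (Function.update lam i s))) (lam i) ∧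
      0 < deriv (fun s =>
          esymm Finset.univ ℓ (Function.update lam i s) /
            esymm Finset.univ k (Function.update lam i s)) (lam i) :=
  stmt_12_general n k ℓ hkℓ hℓ lam hlam i
end
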